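/- arXiv:2501.02561 — 3 statements merged into one kernel-verified Lean document; each statement's English description precedes it below -/
import Mathlib

section
/- Every centered Euclidean ball is intuitive: for every n ≥ 1 and every r > 0, the closed Euclidean ball K = {x ∈ ℝⁿ : ‖x‖₂ ≤ r} is intuitive, i.e., for every finite set P ⊆ ℝⁿ and every probability weight W on P, the set of geometric medians GM_K(W) intersects the convex hull of P. -/
open scoped RealInnerProductSpace

/-- The objective function `F_{K,W}` of the geometric median problem:
`ξ ↦ ∑_{p ∈ P} W p * ‖ξ - p‖_K`, where `‖·‖_K` is the Minkowski gauge of `K`. -/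
noncomputable def medianObj {n : ℕ} (K : Set (EuclideanSpace ℝ (Fin n)))
    (P : Finset (EuclideanSpace ℝ (Fin n))) (W : EuclideanSpace ℝ (Fin n) → ℝ)
    (ξ : EuclideanSpace ℝ (Fin n)) : ℝ :=
  ∑ p ∈ P, W p * gauge K (ξ - p)

/-- The geometric median `GM_K(W)`: the set of global minimizers of `F_{K,W}`. -/
def geomMedian {n : ℕ} (K : Set (EuclideanSpace ℝ (Fin n)))
    (P : Finset (EuclideanSpace ℝ (Fin n))) (W : EuclideanSpace ℝ (Fin n) → ℝ) :
    Set (EuclideanSpace ℝ (Fin n)) :=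
  {ξ | ∀ η, medianObj K P W ξ ≤ medianObj K P W η}

/-- A symmetric convex body: compact, convex, with nonempty interior, and `K = -K`. -/
def IsSymmConvexBody {n : ℕ} (K : Set (EuclideanSpace ℝ (Fin n))) : Prop :=
  Convex ℝ K ∧ IsCompact K ∧ (interior K).Nonempty ∧ K = -K

/-- `K` is intuitive if for every finite set `P` and probability weight `W` on `P`,
some geometric median lies in the convex hull of `P`. -/
def Intuitive {n : ℕ} (K : Set (EuclideanSpace ℝ (Fin n))) : Prop :=
  ∀ (P : Finset (EuclideanSpace ℝ (Fin n))) (W : EuclideanSpace ℝ (Fin n) → ℝ),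
    (∀ p ∈ P, 0 ≤ W p) → (∑ p ∈ P, W p) = 1 →
    (geomMedian K P W ∩ convexHull ℝ (P : Set (EuclideanSpace ℝ (Fin n)))).Nonempty

/-!
For the Euclidean ball the objective is, up to the factor `1 / r`, a nonnegative combination of
the distances to the points of `P`. The nearest-point projection onto the convex hull `C` of `P`
moves no point farther from any point of `C`, so it does not increase the objective; hence a
minimizer of the objective over the compact set `C` is a global minimizer.
-/

section NearestPoint

variable {E : Type*} [NormedAddCommGroup E] [InnerProductSpace ℝ E]

theorem Convex.exists_mem_forall_dist_le {C : Set E} (hconv : Convex ℝ C) (hne : C.Nonempty)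
    (hcomplete : IsComplete C) (x : E) : ∃ v ∈ C, ∀ p ∈ C, dist v p ≤ dist x p := by
  obtain ⟨v, hv, hmin⟩ := exists_norm_eq_iInf_of_complete_convex hne hcomplete hconv x
  refine ⟨v, hv, fun p hp => ?_⟩
  have hobtuse : ⟪x - v, p - v⟫ ≤ 0 := (norm_eq_iInf_iff_real_inner_le_zero hconv hv).1 hmin p hp
  have hexpand : ‖x - p‖ ^ 2 = ‖x - v‖ ^ 2 - 2 * ⟪x - v, p - v⟫ + ‖p - v‖ ^ 2 := by
    rw [← norm_sub_sq_real, sub_sub_sub_cancel_right]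
  have hsq : ‖v - p‖ ^ 2 ≤ ‖x - p‖ ^ 2 := by
    rw [hexpand, norm_sub_rev v p]
    linarith [sq_nonneg ‖x - v‖]
  rw [dist_eq_norm, dist_eq_norm]
  exact (pow_le_pow_iff_left₀ (norm_nonneg _) (norm_nonneg _) two_ne_zero).1 hsq

theorem exists_mem_convexHull_isMinOn_sum_mul_dist {P : Finset E} (hP : P.Nonempty)
    {w : E → ℝ} (hw : ∀ p ∈ P, 0 ≤ w p) :
    ∃ ξ ∈ convexHull ℝ (P : Set E), IsMinOn (fun x => ∑ p ∈ P, w p * dist x p) Set.univ ξ := by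
  set C := convexHull ℝ (P : Set E)
  have hC : IsCompact C := P.finite_toSet.isCompact_convexHull ℝ
  have hCne : C.Nonempty := hP.to_set.mono (subset_convexHull ℝ _)
  have hcont : Continuous fun x => ∑ p ∈ P, w p * dist x p := by fun_prop
  obtain ⟨ξ, hξC, hξmin⟩ := hC.exists_isMinOn hCne hcont.continuousOn
  refine ⟨ξ, hξC, fun x _ => ?_⟩
  obtain ⟨v, hvC, hv⟩ :=
    (convex_convexHull ℝ _).exists_mem_forall_dist_le hCne hC.isComplete x
  calc ∑ p ∈ P, w p * dist ξ p ≤ ∑ p ∈ P, w p * dist v p := hξmin hvC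
    _ ≤ ∑ p ∈ P, w p * dist x p := Finset.sum_le_sum fun p hp =>
        mul_le_mul_of_nonneg_left (hv p (subset_convexHull ℝ _ hp)) (hw p hp)

end NearestPoint

theorem medianObj_closedBall_zero {n : ℕ} {r : ℝ} (hr : 0 ≤ r)
    (P : Finset (EuclideanSpace ℝ (Fin n))) (W : EuclideanSpace ℝ (Fin n) → ℝ)
    (ξ : EuclideanSpace ℝ (Fin n)) :
    medianObj (Metric.closedBall 0 r) P W ξ = (∑ p ∈ P, W p * dist ξ p) / r := by
  simp only [medianObj, gauge_closedBall hr, dist_eq_norm, mul_div_assoc, Finset.sum_div]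

theorem centered_ball_intuitive_general (n : ℕ) (r : ℝ) (hr : 0 < r) :
    Intuitive (Metric.closedBall (0 : EuclideanSpace ℝ (Fin n)) r) := by
  intro P W hW hW1
  have hP : P.Nonempty := Finset.nonempty_of_sum_ne_zero (by rw [hW1]; exact one_ne_zero)
  obtain ⟨ξ, hξC, hξmin⟩ := exists_mem_convexHull_isMinOn_sum_mul_dist hP hW
  refine ⟨ξ, fun η => ?_, hξC⟩
  rw [medianObj_closedBall_zero hr.le, medianObj_closedBall_zero hr.le]
  exact div_le_div_of_nonneg_right (hξmin (Set.mem_univ η)) hr.le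

/-- Every centered Euclidean ball is intuitive. -/
theorem centered_ball_intuitive (n : ℕ) (hn : 1 ≤ n) (r : ℝ) (hr : 0 < r) :
    Intuitive (Metric.closedBall (0 : EuclideanSpace ℝ (Fin n)) r) :=
  centered_ball_intuitive_general n r hr
end

section
/- All centered ellipsoids are intuitive: for every n ≥ 1, if K ⊆ ℝⁿ is the image of the closed Euclidean unit ball under an invertible linear map ℝⁿ → ℝⁿ, then K is intuitive. -/
open scoped RealInnerProductSpace

/-!
Writing `K = T(B)` with `B` the Euclidean unit ball, the gauge of `K` is `ξ ↦ ‖T⁻¹ ξ‖`, so the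
objective `F_{K,W}` at `ξ` is the Euclidean objective for the points `T⁻¹ p` at `T⁻¹ ξ`.
The nearest-point projection onto the convex set `T⁻¹(conv P)` moves no point farther from any
point of that set, hence replacing `T⁻¹ η` by its projection does not increase `F_{K,W}`.
So `F_{K,W}` attains its infimum on the compact set `conv P`.
-/

theorem gauge_image_linearEquiv {E F : Type*} [AddCommGroup E] [Module ℝ E] [AddCommGroup F]
    [Module ℝ F] (T : E ≃ₗ[ℝ] F) (s : Set E) (x : F) :
    gauge (T '' s) x = gauge s (T.symm x) := by
  simp only [gauge_def', T.image_eq_preimage_symm, Set.mem_preimage, map_smul]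

theorem exists_mem_forall_norm_sub_le_norm_sub {F : Type*} [NormedAddCommGroup F]
    [InnerProductSpace ℝ F] {D : Set F} (hne : D.Nonempty) (hcomplete : IsComplete D)
    (hconv : Convex ℝ D) (u : F) :
    ∃ v ∈ D, ∀ w ∈ D, ‖v - w‖ ≤ ‖u - w‖ := by
  obtain ⟨v, hv, hmin⟩ := exists_norm_eq_iInf_of_complete_convex hne hcomplete hconv u
  refine ⟨v, hv, fun w hw => ?_⟩
  have hobtuse : ⟪u - v, w - v⟫ ≤ 0 :=
    (norm_eq_iInf_iff_real_inner_le_zero hconv hv).1 hmin w hw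
  have hsq : ‖u - w‖ ^ 2 = ‖u - v‖ ^ 2 - 2 * ⟪u - v, w - v⟫ + ‖v - w‖ ^ 2 := by
    rw [show u - w = (u - v) - (w - v) by abel, norm_sub_sq_real, norm_sub_rev w v]
  exact (pow_le_pow_iff_left₀ (norm_nonneg _) (norm_nonneg _) two_ne_zero).mp
    (by nlinarith [sq_nonneg ‖u - v‖])

theorem IsCompact.exists_mem_forall_le_of_forall_exists_mem_le {X α : Type*}
    [TopologicalSpace X] [LinearOrder α] [TopologicalSpace α] [ClosedIicTopology α]
    {C : Set X} {f : X → α} (hC : IsCompact C) (hne : C.Nonempty) (hf : ContinuousOn f C)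
    (hdom : ∀ η, ∃ ζ ∈ C, f ζ ≤ f η) :
    ∃ ξ ∈ C, ∀ η, f ξ ≤ f η := by
  obtain ⟨ξ, hξ, hmin⟩ := hC.exists_isMinOn hne hf
  refine ⟨ξ, hξ, fun η => ?_⟩
  obtain ⟨ζ, hζ, hζη⟩ := hdom η
  exact (hmin hζ).trans hζη

section Ellipsoid

variable {n : ℕ} (T : EuclideanSpace ℝ (Fin n) ≃ₗ[ℝ] EuclideanSpace ℝ (Fin n))
  (P : Finset (EuclideanSpace ℝ (Fin n))) (W : EuclideanSpace ℝ (Fin n) → ℝ)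

theorem medianObj_image_closedBall (ξ : EuclideanSpace ℝ (Fin n)) :
    medianObj (T '' Metric.closedBall 0 1) P W ξ = ∑ p ∈ P, W p * ‖T.symm ξ - T.symm p‖ := by
  refine Finset.sum_congr rfl fun p _ => ?_
  rw [gauge_image_linearEquiv, gauge_closedBall zero_le_one, div_one, map_sub]

theorem continuous_medianObj_image_closedBall :
    Continuous (medianObj (T '' Metric.closedBall 0 1) P W) := by
  have hT : Continuous T.symm := T.symm.toLinearMap.continuous_of_finiteDimensional
  simp only [funext (medianObj_image_closedBall T P W)]
  fun_prop

theorem exists_mem_convexHull_medianObj_image_closedBall_le (hP : P.Nonempty)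
    (hW : ∀ p ∈ P, 0 ≤ W p) (η : EuclideanSpace ℝ (Fin n)) :
    ∃ ζ ∈ convexHull ℝ (P : Set (EuclideanSpace ℝ (Fin n))),
      medianObj (T '' Metric.closedBall 0 1) P W ζ ≤
        medianObj (T '' Metric.closedBall 0 1) P W η := by
  have hT : Continuous T.symm := T.symm.toLinearMap.continuous_of_finiteDimensional
  set C := convexHull ℝ (P : Set (EuclideanSpace ℝ (Fin n)))
  have hCne : C.Nonempty := (Finset.coe_nonempty.mpr hP).mono (subset_convexHull ℝ _)
  have hDcomplete : IsComplete (T.symm '' C) :=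
    ((P.finite_toSet.isCompact_convexHull ℝ).image hT).isComplete
  have hDconv : Convex ℝ (T.symm '' C) := (convex_convexHull ℝ _).linear_image T.symm.toLinearMap
  obtain ⟨_, ⟨ζ, hζC, rfl⟩, hζ⟩ :=
    exists_mem_forall_norm_sub_le_norm_sub (hCne.image _) hDcomplete hDconv (T.symm η)
  refine ⟨ζ, hζC, ?_⟩
  rw [medianObj_image_closedBall, medianObj_image_closedBall]
  exact Finset.sum_le_sum fun p hp => mul_le_mul_of_nonneg_left
    (hζ _ (Set.mem_image_of_mem _ (subset_convexHull ℝ _ hp))) (hW p hp)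

end Ellipsoid

theorem centered_ellipsoid_intuitive_general (n : ℕ)
    (K : Set (EuclideanSpace ℝ (Fin n)))
    (T : EuclideanSpace ℝ (Fin n) ≃ₗ[ℝ] EuclideanSpace ℝ (Fin n))
    (hKT : K = T '' Metric.closedBall (0 : EuclideanSpace ℝ (Fin n)) 1) :
    Intuitive K := by
  subst hKT
  intro P W hW hW1
  have hP : P.Nonempty := Finset.nonempty_of_sum_ne_zero (hW1 ▸ one_ne_zero)
  obtain ⟨ξ, hξP, hξ⟩ :=
    (P.finite_toSet.isCompact_convexHull ℝ).exists_mem_forall_le_of_forall_exists_mem_le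
      ((Finset.coe_nonempty.mpr hP).mono (subset_convexHull ℝ _))
      (continuous_medianObj_image_closedBall T P W).continuousOn
      (exists_mem_convexHull_medianObj_image_closedBall_le T P W hP hW)
  exact ⟨ξ, hξ, hξP⟩

/-- All centered ellipsoids are intuitive. -/
theorem centered_ellipsoid_intuitive (n : ℕ) (hn : 1 ≤ n)
    (K : Set (EuclideanSpace ℝ (Fin n)))
    (T : EuclideanSpace ℝ (Fin n) ≃ₗ[ℝ] EuclideanSpace ℝ (Fin n))
    (hKT : K = T '' Metric.closedBall (0 : EuclideanSpace ℝ (Fin n)) 1) :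
    Intuitive K :=
  centered_ellipsoid_intuitive_general n K T hKT
end

section
/- Let K ⊆ ℝ³ be an intuitive symmetric convex body. Let ℓ be a Euclidean unit vector in ℝ³, let H = ℓ^⊥ be the plane orthogonal to ℓ, and let L = K ∩ H. Assume there are boundary points x, y of L (in H) such that the norm function F_{K,0}(ξ) = ‖ξ‖_K is differentiable at x and at y, and there exist subgradients g_x ∈ ∂F_{L,0}(x) and g_y ∈ ∂F_{L,0}(y) (subgradients of the restriction of ‖·‖_K to H, taken within H) that span H. Then there exists a Euclidean unit vector u ∈ ℝ³ such that the boundary of L (relative to H) is contained in the shadow boundary S(K, u). -/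
open scoped RealInnerProductSpace

/-- The line through `a` with direction `u`. -/
def lineThrough {n : ℕ} (a u : EuclideanSpace ℝ (Fin n)) : Set (EuclideanSpace ℝ (Fin n)) :=
  {x | ∃ t : ℝ, x = a + t • u}

/-- A set `ℓ` (a line) is tangent to `K` if it meets `K` but misses the interior of `K`. -/
def IsTangentLine {n : ℕ} (K ℓ : Set (EuclideanSpace ℝ (Fin n))) : Prop :=
  (ℓ ∩ K).Nonempty ∧ ℓ ∩ interior K = ∅

/-- `T(K, u)`: the union of all lines tangent to `K` and parallel to `u`. -/
def tangentLinesUnion {n : ℕ} (K : Set (EuclideanSpace ℝ (Fin n)))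
    (u : EuclideanSpace ℝ (Fin n)) : Set (EuclideanSpace ℝ (Fin n)) :=
  ⋃ (a : EuclideanSpace ℝ (Fin n)) (_ : IsTangentLine K (lineThrough a u)), lineThrough a u

/-- The shadow boundary `S(K, u) = T(K, u) ∩ K`. -/
def shadowBoundary {n : ℕ} (K : Set (EuclideanSpace ℝ (Fin n)))
    (u : EuclideanSpace ℝ (Fin n)) : Set (EuclideanSpace ℝ (Fin n)) :=
  tangentLinesUnion K u ∩ K

/-!
Differentiability of `‖·‖_K` at `x` and `y` gives a direction `d ≠ 0` along which the norm is
flat at both points. Let `z` be a point of the relative boundary of `L`. A supporting functional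
of `L` at `z` lies in `H = span {g_x, g_y}`, say it is `a g_x + b g_y`; as `(-x, -g_x)` and
`(-y, -g_y)` qualify as well, we may assume `a, b ≥ 0`. Then `0` minimises
`ξ ↦ a ‖ξ + x‖ + b ‖ξ + y‖ + ‖ξ - z‖` over `H`, and since `-x, -y, z ∈ H`, intuitiveness makes
`0` a global minimiser. On the line `ℝ d` the first two terms are flat at `0`, so the convex
function `s ↦ ‖s d - z‖` is minimal at `0`: the line `z + ℝ d` misses the interior of `K`.
-/

open Set Filter Topology Module

theorem ConvexOn.isMinOn_of_isLocalMin_add {φ ψ : ℝ → ℝ} {a : ℝ} (hφ : ConvexOn ℝ univ φ)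
    (hψ : HasDerivAt ψ 0 a) (hmin : IsLocalMin (φ + ψ) a) : IsMinOn φ univ a := by
  have hlim : Tendsto (fun s => -slope ψ a s) (𝓝[≠] a) (𝓝 0) := by
    simpa using (hasDerivAt_iff_tendsto_slope.mp hψ).neg
  have hmin' : ∀ᶠ s in 𝓝 a, ψ a - ψ s ≤ φ s - φ a := hmin.mono fun s hs => by
    simp only [Pi.add_apply] at hs
    linarith
  refine isMinOn_univ_iff.2 fun t => ?_
  rcases lt_trichotomy t a with hta | rfl | hat
  · have hslope : slope φ a t ≤ 0 := by
      refine ge_of_tendsto (hlim.mono_left (nhdsLT_le_nhdsNE a)) ?_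
      filter_upwards [Ioo_mem_nhdsLT hta, nhdsWithin_le_nhds hmin'] with s hs hs'
      calc slope φ a t ≤ slope φ a s :=
            hφ.monotoneOn_slope_lt (mem_univ a) ⟨mem_univ t, hta⟩ ⟨mem_univ s, hs.2⟩ hs.1.le
        _ ≤ -slope ψ a s := by
          rw [slope_def_field, slope_def_field, ← neg_div,
            div_le_div_right_of_neg (sub_neg.2 hs.2)]
          linarith
    rw [slope_def_field, div_nonpos_iff] at hslope
    rcases hslope with h | h
    · linarith [h.2, sub_neg.2 hta]
    · linarith [h.1]
  · exact le_rfl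
  · have hslope : 0 ≤ slope φ a t := by
      refine le_of_tendsto (hlim.mono_left (nhdsGT_le_nhdsNE a)) ?_
      filter_upwards [Ioo_mem_nhdsGT hat, nhdsWithin_le_nhds hmin'] with s hs hs'
      calc -slope ψ a s ≤ slope φ a s := by
            rw [slope_def_field, slope_def_field, ← neg_div,
              div_le_div_iff_of_pos_right (sub_pos.2 hs.1)]
            linarith
        _ ≤ slope φ a t :=
            hφ.monotoneOn_slope_gt (mem_univ a) ⟨mem_univ s, hs.1⟩ ⟨mem_univ t, hat⟩ hs.2.le
    rw [slope_def_field] at hslope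
    linarith [(div_nonneg_iff.mp hslope).resolve_right fun h => by linarith [h.2]]

theorem HasLineDerivAt.neg_of_even {E : Type*} [NormedAddCommGroup E] [NormedSpace ℝ E]
    {f : E → ℝ} {f' : ℝ} {x d : E} (hf : ∀ w, f (-w) = f w) (h : HasLineDerivAt ℝ f f' x d) :
    HasLineDerivAt ℝ f (-f') (-x) d := by
  have h' := h.smul (-1 : ℝ)
  rw [neg_one_smul, neg_one_smul] at h'
  unfold HasLineDerivAt at h' ⊢
  convert h' using 2 with t
  rw [← hf]
  congr 1
  module

section Subgradient

variable {E : Type*} [NormedAddCommGroup E] [InnerProductSpace ℝ E]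

/-- For `f = gauge K` and `s = H` this is `g ∈ ∂F_{L,0}(x)`. -/
def IsSubgradientWithin (f : E → ℝ) (s : Set E) (x g : E) : Prop :=
  ∀ w ∈ s, f x + ⟪g, w - x⟫ ≤ f w

theorem IsSubgradientWithin.neg {f : E → ℝ} {s : Set E} {x g : E} (hf : ∀ w, f (-w) = f w)
    (hs : ∀ w ∈ s, -w ∈ s) (h : IsSubgradientWithin f s x g) :
    IsSubgradientWithin f s (-x) (-g) := by
  intro w hw
  have := h (-w) (hs w hw)
  rw [hf] at this
  rw [hf]
  convert this using 2
  rw [inner_neg_left, ← inner_neg_right]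
  congr 1
  abel

end Subgradient

section Gauge

variable {E : Type*} [AddCommGroup E] [Module ℝ E] {K : Set E}

theorem convexOn_gauge_comp_line (hc : Convex ℝ K) (ha : Absorbent ℝ K) (a d : E) :
    ConvexOn ℝ univ fun t : ℝ => gauge K (a + t • d) := by
  refine ⟨convex_univ, fun s _ t _ p q hp hq hpq => ?_⟩
  calc gauge K (a + (p • s + q • t) • d) = gauge K (p • (a + s • d) + q • (a + t • d)) := by
        congr 1
        linear_combination (norm := module) -(hpq • a)
    _ ≤ p • gauge K (a + s • d) + q • gauge K (a + t • d) := by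
        refine (gauge_add_le hc ha _ _).trans_eq ?_
        rw [gauge_smul_of_nonneg hp, gauge_smul_of_nonneg hq]

theorem exists_linearMap_le_gauge (hc : Convex ℝ K) (ha : Absorbent ℝ K) (z : E) :
    ∃ φ : E →ₗ[ℝ] ℝ, φ z = gauge K z ∧ ∀ w, φ w ≤ gauge K w := by
  let f : E →ₗ.[ℝ] ℝ := LinearPMap.mkSpanSingleton' z (gauge K z) fun c hcz => by
    rcases smul_eq_zero.1 hcz with rfl | rfl <;> simp [gauge_zero]
  have hf : ∀ w : f.domain, f w ≤ gauge K w := by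
    rintro ⟨w, hw⟩
    obtain ⟨c, rfl⟩ := Submodule.mem_span_singleton.1 hw
    rw [LinearPMap.mkSpanSingleton'_apply, RingHom.id_apply, smul_eq_mul]
    rcases le_or_gt 0 c with hc | hc
    · rw [gauge_smul_of_nonneg hc, smul_eq_mul]
    · exact (mul_nonpos_of_nonpos_of_nonneg hc.le (gauge_nonneg z)).trans (gauge_nonneg _)
  obtain ⟨φ, hφf, hφ⟩ := exists_extension_of_le_sublinear f (gauge K)
    (fun c hc => gauge_smul_of_nonneg hc.le) (gauge_add_le hc ha) hf
  exact ⟨φ, (hφf ⟨z, Submodule.mem_span_singleton_self z⟩).trans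
    (LinearPMap.mkSpanSingleton'_apply_self _ _ _ _), hφ⟩

end Gauge

theorem exists_isSubgradientWithin_gauge {E : Type*} [NormedAddCommGroup E]
    [InnerProductSpace ℝ E] {K : Set E} (hc : Convex ℝ K) (ha : Absorbent ℝ K)
    (H : Submodule ℝ E) [FiniteDimensional ℝ H] {z : E} (hz : z ∈ H) :
    ∃ g ∈ H, IsSubgradientWithin (gauge K) H z g := by
  obtain ⟨φ, hφz, hφ⟩ := exists_linearMap_le_gauge hc ha z
  let g : H := (InnerProductSpace.toDual ℝ H).symm (φ ∘ₗ H.subtype).toContinuousLinearMap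
  have hg : ∀ v ∈ H, ⟪(g : E), v⟫ = φ v := fun v hv => by
    have := InnerProductSpace.toDual_symm_apply (x := (⟨v, hv⟩ : H))
      (y := (φ ∘ₗ H.subtype).toContinuousLinearMap)
    rw [Submodule.coe_inner] at this
    exact this
  refine ⟨g, g.2, fun w hw => ?_⟩
  rw [hg _ (H.sub_mem hw hz), map_sub, hφz, add_sub_cancel]
  exact hφ w

theorem exists_ne_zero_apply_eq_zero {E : Type*} [AddCommGroup E] [Module ℝ E]
    [FiniteDimensional ℝ E] (hE : 2 < finrank ℝ E) (f g : E →ₗ[ℝ] ℝ) :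
    ∃ d ≠ 0, f d = 0 ∧ g d = 0 := by
  obtain ⟨d, hd, hd0⟩ := Submodule.ne_bot_iff _ |>.1 <|
    LinearMap.ker_ne_bot_of_finrank_lt (f := f.prod g) (by simpa using hE)
  exact ⟨d, hd0, by simpa [Prod.ext_iff] using hd⟩

section Euclidean

variable {n : ℕ} {K : Set (EuclideanSpace ℝ (Fin n))}

theorem IsSymmConvexBody.zero_mem_interior (hK : IsSymmConvexBody K) :
    (0 : EuclideanSpace ℝ (Fin n)) ∈ interior K := by
  obtain ⟨hc, -, ⟨w, hw⟩, hsymm⟩ := hK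
  have hw' : -w ∈ interior K := by
    have : w ∈ interior (Homeomorph.neg _ ⁻¹' K) := by
      convert hw using 2
      exact hsymm.symm
    rwa [← Homeomorph.preimage_interior] at this
  simpa using hc.interior hw hw' (by norm_num : (0 : ℝ) ≤ 1 / 2) (by norm_num : (0 : ℝ) ≤ 1 / 2)
    (by norm_num)

theorem IsSymmConvexBody.absorbent (hK : IsSymmConvexBody K) : Absorbent ℝ K :=
  absorbent_nhds_zero (mem_interior_iff_mem_nhds.1 hK.zero_mem_interior)

theorem IsSymmConvexBody.gauge_neg (hK : IsSymmConvexBody K) (w : EuclideanSpace ℝ (Fin n)) :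
    gauge K (-w) = gauge K w :=
  _root_.gauge_neg (fun v hv => by rw [hK.2.2.2]; simpa using hv) w

theorem IsSymmConvexBody.mem_shadowBoundary (hK : IsSymmConvexBody K)
    {z u : EuclideanSpace ℝ (Fin n)} (hz : gauge K z = 1) (h : ∀ t : ℝ, 1 ≤ gauge K (z + t • u)) :
    z ∈ shadowBoundary K u := by
  have hzK : z ∈ K := by
    rw [← hK.2.1.isClosed.closure_eq, ← gauge_le_one_iff_mem_closure hK.1
      (mem_interior_iff_mem_nhds.1 hK.zero_mem_interior)]
    exact hz.le
  have hz₀ : z ∈ lineThrough z u := ⟨0, by simp⟩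
  refine ⟨mem_iUnion₂.2 ⟨z, ⟨⟨z, hz₀, hzK⟩, ?_⟩, hz₀⟩, hzK⟩
  refine eq_empty_of_forall_notMem ?_
  rintro _ ⟨⟨t, rfl⟩, hint⟩
  exact (h t).not_gt (interior_subset_gauge_lt_one K hint)

theorem Intuitive.isMinOn_univ_of_isMinOn (hI : Intuitive K) {ι : Type*} [Fintype ι]
    {p : ι → EuclideanSpace ℝ (Fin n)} {w : ι → ℝ} (hw : ∀ i, 0 ≤ w i) (hw' : 0 < ∑ i, w i)
    {C : Set (EuclideanSpace ℝ (Fin n))} (hC : Convex ℝ C) (hp : ∀ i, p i ∈ C)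
    {ξ : EuclideanSpace ℝ (Fin n)} (hξ : IsMinOn (fun η => ∑ i, w i * gauge K (η - p i)) C ξ) :
    IsMinOn (fun η => ∑ i, w i * gauge K (η - p i)) univ ξ := by
  classical
  let P := Finset.univ.image p
  -- points of `p` may coincide, so the weight of a point of `P` is that of its whole fibre
  let W : EuclideanSpace ℝ (Fin n) → ℝ := fun q => (∑ i with p i = q, w i) / ∑ i, w i
  have hP : ∀ i ∈ Finset.univ, p i ∈ P := fun i _ => Finset.mem_image_of_mem p (Finset.mem_univ i)
  have hsum : ∀ f : EuclideanSpace ℝ (Fin n) → ℝ,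
      ∑ q ∈ P, W q * f q = (∑ i, w i * f (p i)) / ∑ i, w i := by
    intro f
    rw [← Finset.sum_fiberwise_of_maps_to hP (fun i => w i * f (p i)), Finset.sum_div]
    refine Finset.sum_congr rfl fun q _ => ?_
    rw [div_mul_eq_mul_div, Finset.sum_mul, Finset.sum_div, Finset.sum_div]
    refine Finset.sum_congr rfl fun i hi => ?_
    rw [(Finset.mem_filter.1 hi).2]
  obtain ⟨ξ₀, hmed, hhull⟩ := hI P W
    (fun q _ => div_nonneg (Finset.sum_nonneg fun i _ => hw i) hw'.le)
    (by simpa only [Pi.one_apply, mul_one, div_self hw'.ne'] using hsum 1)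
  have hξ₀ : ξ₀ ∈ C := convexHull_min (by simpa [P, Set.range_subset_iff] using hp) hC hhull
  refine isMinOn_univ_iff.2 fun η => (hξ hξ₀).trans ?_
  have := hmed η
  simp only [medianObj, hsum fun q => gauge K (_ - q)] at this
  exact (div_le_div_iff_of_pos_right hw').1 this

theorem Intuitive.gauge_le_gauge_add_smul_of_nonneg (hI : Intuitive K) (hc : Convex ℝ K)
    (ha : Absorbent ℝ K) (hneg : ∀ w, gauge K (-w) = gauge K w)
    {H : Submodule ℝ (EuclideanSpace ℝ (Fin n))} {ι : Type*} [Fintype ι]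
    {x g : ι → EuclideanSpace ℝ (Fin n)} {w : ι → ℝ} {z d : EuclideanSpace ℝ (Fin n)}
    (hw : ∀ i, 0 ≤ w i) (hxH : ∀ i, x i ∈ H)
    (hx : ∀ i, IsSubgradientWithin (gauge K) H (x i) (g i))
    (hd : ∀ i, HasLineDerivAt ℝ (gauge K) 0 (x i) d) (hzH : z ∈ H)
    (hz : IsSubgradientWithin (gauge K) H z (∑ i, w i • g i)) (t : ℝ) :
    gauge K z ≤ gauge K (z + t • d) := by
  let p : Option ι → EuclideanSpace ℝ (Fin n) := fun o => o.elim z fun i => -x i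
  let v : Option ι → ℝ := fun o => o.elim 1 w
  let F := fun η => ∑ o, v o * gauge K (η - p o)
  have hF : ∀ η, F η = gauge K (η - z) + ∑ i, w i * gauge K (η + x i) := by
    intro η
    simp [F, p, v, Fintype.sum_option]
  have hminH : IsMinOn F H 0 := by
    intro ξ hξ
    have hz' : gauge K z - ∑ i, w i * ⟪g i, ξ⟫ ≤ gauge K (ξ - z) := by
      have := hz (z - ξ) (H.sub_mem hzH hξ)
      simp only [sub_sub_cancel_left, inner_neg_right, sum_inner, real_inner_smul_left] at this
      rwa [← neg_sub, hneg, ← sub_eq_add_neg] at this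
    have hx' : ∑ i, w i * (gauge K (x i) + ⟪g i, ξ⟫) ≤ ∑ i, w i * gauge K (ξ + x i) := by
      refine Finset.sum_le_sum fun i _ => mul_le_mul_of_nonneg_left ?_ (hw i)
      simpa using hx i (ξ + x i) (H.add_mem hξ (hxH i))
    simp only [mul_add, Finset.sum_add_distrib] at hx'
    show F 0 ≤ F ξ
    rw [hF, hF, zero_sub, hneg]
    simp only [zero_add]
    linarith
  have hmin : IsMinOn F univ 0 := hI.isMinOn_univ_of_isMinOn (p := p) (w := v)
    (by rintro (_ | i); exacts [zero_le_one, hw i])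
    (by simpa [v, Fintype.sum_option] using
      add_pos_of_pos_of_nonneg one_pos (Finset.sum_nonneg fun i _ => hw i))
    H.convex (by rintro (_ | i); exacts [hzH, H.neg_mem (hxH i)]) hminH
  have hψ : HasDerivAt (fun s : ℝ => ∑ i, w i * gauge K (x i + s • d)) 0 0 := by
    simpa using HasDerivAt.fun_sum fun i _ => HasDerivAt.const_mul (w i) (hd i)
  have hloc : IsLocalMin ((fun s : ℝ => gauge K (-z + s • d)) +
      fun s => ∑ i, w i * gauge K (x i + s • d)) 0 := by
    refine IsMinOn.isLocalMin (s := univ) (fun s _ => ?_) univ_mem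
    have := isMinOn_univ_iff.1 hmin (s • d)
    rw [hF, hF] at this
    simpa [add_comm, sub_eq_neg_add] using this
  have : gauge K (-z + (0 : ℝ) • d) ≤ gauge K (-z + (-t) • d) := isMinOn_univ_iff.1
    ((convexOn_gauge_comp_line hc ha (-z) d).isMinOn_of_isLocalMin_add hψ hloc) (-t)
  rwa [zero_smul, add_zero, neg_smul, ← neg_add, hneg, hneg] at this

theorem Intuitive.gauge_le_gauge_add_smul (hI : Intuitive K) (hc : Convex ℝ K)
    (ha : Absorbent ℝ K) (hneg : ∀ w, gauge K (-w) = gauge K w)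
    {H : Submodule ℝ (EuclideanSpace ℝ (Fin n))} {ι : Type*} [Fintype ι]
    {x g : ι → EuclideanSpace ℝ (Fin n)} {a : ι → ℝ} {z d : EuclideanSpace ℝ (Fin n)}
    (hxH : ∀ i, x i ∈ H) (hx : ∀ i, IsSubgradientWithin (gauge K) H (x i) (g i))
    (hd : ∀ i, HasLineDerivAt ℝ (gauge K) 0 (x i) d) (hzH : z ∈ H)
    (hz : IsSubgradientWithin (gauge K) H z (∑ i, a i • g i)) (t : ℝ) :
    gauge K z ≤ gauge K (z + t • d) := by
  refine hI.gauge_le_gauge_add_smul_of_nonneg hc ha hneg (x := Sum.elim x (-x))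
    (g := Sum.elim g (-g)) (w := Sum.elim (fun i => (a i)⁺) fun i => (a i)⁻) ?_ ?_ ?_ ?_ hzH ?_ t
  · rintro (i | i) <;> simp [posPart_nonneg, negPart_nonneg]
  · rintro (i | i)
    exacts [hxH i, H.neg_mem (hxH i)]
  · rintro (i | i)
    exacts [hx i, (hx i).neg hneg fun w hw => H.neg_mem hw]
  · rintro (i | i)
    exacts [hd i, by simpa using (hd i).neg_of_even hneg]
  · convert hz using 2
    simp only [Fintype.sum_sum_type, Sum.elim_inl, Sum.elim_inr, Pi.neg_apply, smul_neg,
      Finset.sum_neg_distrib, ← sub_eq_add_neg, ← Finset.sum_sub_distrib, ← sub_smul,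
      posPart_sub_negPart]

end Euclidean

theorem boundary_section_subset_shadowBoundary_general
    (K : Set (EuclideanSpace ℝ (Fin 3))) (hK : IsSymmConvexBody K) (hI : Intuitive K)
    (H : Submodule ℝ (EuclideanSpace ℝ (Fin 3)))
    (x y : EuclideanSpace ℝ (Fin 3)) (hxH : x ∈ H) (hyH : y ∈ H)
    (hdx : DifferentiableAt ℝ (gauge K) x) (hdy : DifferentiableAt ℝ (gauge K) y)
    (gx gy : EuclideanSpace ℝ (Fin 3))
    (hgx : ∀ w ∈ H, gauge K x + ⟪gx, w - x⟫ ≤ gauge K w)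
    (hgy : ∀ w ∈ H, gauge K y + ⟪gy, w - y⟫ ≤ gauge K w)
    (hspan : Submodule.span ℝ {gx, gy} = H) :
    ∃ u : EuclideanSpace ℝ (Fin 3), ‖u‖ = 1 ∧
      {z : EuclideanSpace ℝ (Fin 3) | z ∈ H ∧ gauge K z = 1} ⊆ shadowBoundary K u := by
  obtain ⟨d, hd, hxd, hyd⟩ := exists_ne_zero_apply_eq_zero (by simp)
    (fderiv ℝ (gauge K) x : EuclideanSpace ℝ (Fin 3) →ₗ[ℝ] ℝ) (fderiv ℝ (gauge K) y)
  have hdx' : HasLineDerivAt ℝ (gauge K) 0 x d := hxd ▸ hdx.hasFDerivAt.hasLineDerivAt d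
  have hdy' : HasLineDerivAt ℝ (gauge K) 0 y d := hyd ▸ hdy.hasFDerivAt.hasLineDerivAt d
  refine ⟨‖d‖⁻¹ • d, norm_smul_inv_norm hd,
    fun z ⟨hzH, hz⟩ => hK.mem_shadowBoundary hz fun t => ?_⟩
  obtain ⟨g, hgH, hg⟩ := exists_isSubgradientWithin_gauge hK.1 hK.absorbent H hzH
  obtain ⟨a, b, rfl⟩ := Submodule.mem_span_pair.1 (hspan ▸ hgH)
  have := hI.gauge_le_gauge_add_smul hK.1 hK.absorbent hK.gauge_neg (x := ![x, y])
    (g := ![gx, gy]) (a := ![a, b]) (Fin.forall_fin_two.2 ⟨hxH, hyH⟩)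
    (Fin.forall_fin_two.2 ⟨hgx, hgy⟩) (Fin.forall_fin_two.2 ⟨hdx', hdy'⟩) hzH
    (by simpa [Fin.sum_univ_two] using hg) (t * ‖d‖⁻¹)
  rwa [hz, mul_smul] at this

/-- Proposition 7: if `K ⊆ ℝ³` is intuitive, `H = ℓ^⊥`, `L = K ∩ H`, and there are
boundary points `x, y` of `L` at which `‖·‖_K` is differentiable, with subgradients
(in `H`) of the restricted norm spanning `H`, then the boundary of `L` is contained
in a shadow boundary `S(K, u)`. -/
theorem boundary_section_subset_shadowBoundary
    (K : Set (EuclideanSpace ℝ (Fin 3))) (hK : IsSymmConvexBody K) (hI : Intuitive K)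
    (ℓ : EuclideanSpace ℝ (Fin 3)) (hℓ : ‖ℓ‖ = 1)
    (H : Submodule ℝ (EuclideanSpace ℝ (Fin 3))) (hH : H = (ℝ ∙ ℓ)ᗮ)
    (x y : EuclideanSpace ℝ (Fin 3)) (hxH : x ∈ H) (hyH : y ∈ H)
    (hx : gauge K x = 1) (hy : gauge K y = 1)
    (hdx : DifferentiableAt ℝ (gauge K) x) (hdy : DifferentiableAt ℝ (gauge K) y)
    (gx gy : EuclideanSpace ℝ (Fin 3)) (hgxH : gx ∈ H) (hgyH : gy ∈ H)
    (hgx : ∀ w ∈ H, gauge K x + ⟪gx, w - x⟫ ≤ gauge K w)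
    (hgy : ∀ w ∈ H, gauge K y + ⟪gy, w - y⟫ ≤ gauge K w)
    (hspan : Submodule.span ℝ {gx, gy} = H) :
    ∃ u : EuclideanSpace ℝ (Fin 3), ‖u‖ = 1 ∧
      {z : EuclideanSpace ℝ (Fin 3) | z ∈ H ∧ gauge K z = 1} ⊆ shadowBoundary K u :=
  boundary_section_subset_shadowBoundary_general K hK hI H x y hxH hyH hdx hdy gx gy hgx hgy hspan
end
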